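/- arXiv:0903.2851 — 5 statements merged into one kernel-verified Lean document; each statement's English description precedes it below -/
import Mathlib

section
/- For the NormalHedge potential, regret is controlled by the scale: if N is a positive integer, R_1,…,R_N are real numbers, c > 0, and (1/N) Σ_{i=1}^N exp(([R_i]_+)²/(2c)) = e, then for every index i one has R_i ≤ √(2c(ln N + 1)). (First part of Lemma 1.) -/
open Real Finset

lemma le_log_add_of_mean_exp_eq {ι : Type*} {s : Finset ι} {f : ι → ℝ} {n a : ℝ}
    (h : (1 / n) * ∑ j ∈ s, exp (f j) = exp a) {i : ι} (hi : i ∈ s) :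
    f i ≤ log n + a := by
  have hterm_le : exp (f i) ≤ ∑ j ∈ s, exp (f j) :=
    single_le_sum (fun j _ => (exp_pos (f j)).le) hi
  have hn : 0 < n := by
    have hmean_pos : 0 < (1 / n) * ∑ j ∈ s, exp (f j) := h ▸ exp_pos a
    exact one_div_pos.mp (pos_of_mul_pos_left hmean_pos ((exp_pos _).le.trans hterm_le))
  have hsum : ∑ j ∈ s, exp (f j) = exp (log n + a) := by
    rw [exp_add, exp_log hn, ← h]
    field_simp
  exact exp_le_exp.mp (hsum ▸ hterm_le)

lemma le_sqrt_of_max_zero_sq_div_le {x c L : ℝ} (hc : 0 < c) (h : max x 0 ^ 2 / c ≤ L) :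
    x ≤ sqrt (c * L) :=
  calc x ≤ |max x 0| := (le_max_left x 0).trans (le_abs_self _)
    _ ≤ sqrt (c * L) := abs_le_sqrt (by rwa [div_le_iff₀ hc, mul_comm] at h)

theorem normalHedge_regret_le_of_potential_eq_general
    {N : ℕ} (R : Fin N → ℝ) (c : ℝ) (hc : 0 < c)
    (heq : (1 / N : ℝ) * ∑ i, Real.exp (max (R i) 0 ^ 2 / (2 * c)) = Real.exp 1)
    (i : Fin N) :
    R i ≤ Real.sqrt (2 * c * (Real.log N + 1)) :=
  le_sqrt_of_max_zero_sq_div_le (by positivity) (le_log_add_of_mean_exp_eq heq (mem_univ i))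

/-- First part of Lemma 1: for the NormalHedge potential, regret is controlled by the
scale.  If the average potential equals `e`, then every regret `R i` is at most
`√(2c(ln N + 1))`. -/
theorem normalHedge_regret_le_of_potential_eq
    {N : ℕ} (hN : 0 < N) (R : Fin N → ℝ) (c : ℝ) (hc : 0 < c)
    (heq : (1 / N : ℝ) * ∑ i, Real.exp (max (R i) 0 ^ 2 / (2 * c)) = Real.exp 1)
    (i : Fin N) :
    R i ≤ Real.sqrt (2 * c * (Real.log N + 1)) :=
  normalHedge_regret_le_of_potential_eq_general R c hc heq i
end

section
/- Quantile version of the scale-to-regret bound: if N is a positive integer, R_1,…,R_N are real numbers, c > 0, and (1/N) Σ_{i=1}^N exp(([R_i]_+)²/(2c)) = e, then for every 0 < ε ≤ 1 and every index i such that the number of indices j with R_j ≥ R_i is at least εN, one has R_i ≤ √(2c(ln(1/ε) + 1)). (Second part of Lemma 1.) -/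
open Real Finset

/-! A Markov-type count: every regret at least `R i` contributes at least the potential of `R i`
to the total potential `N e`, so these `εN` regrets force `ε · exp ([R i]₊² / 2c) ≤ e`, which
is the claimed bound after taking logarithms and square roots. -/

theorem card_filter_le_mul_le_sum {ι α : Type*} [Preorder α] [DecidableLE α] (s : Finset ι) {f : α → ℝ}
    (hf : Monotone f) (hf0 : ∀ x, 0 ≤ f x) (g : ι → α) (a : α) :
    #(s.filter fun j => a ≤ g j) * f a ≤ ∑ j ∈ s, f (g j) :=
  calc #(s.filter fun j => a ≤ g j) * f a = ∑ _j ∈ s.filter fun j => a ≤ g j, f a := by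
        rw [sum_const, nsmul_eq_mul]
    _ ≤ ∑ j ∈ s.filter fun j => a ≤ g j, f (g j) :=
        sum_le_sum fun j hj => hf (mem_filter.1 hj).2
    _ ≤ ∑ j ∈ s, f (g j) :=
        sum_le_sum_of_subset_of_nonneg (filter_subset _ _) fun j _ _ => hf0 (g j)

noncomputable def hedgePotential (c x : ℝ) : ℝ := exp (max x 0 ^ 2 / (2 * c))

theorem hedgePotential_nonneg (c x : ℝ) : 0 ≤ hedgePotential c x := (exp_pos _).le

theorem monotone_hedgePotential {c : ℝ} (hc : 0 ≤ c) : Monotone (hedgePotential c) := by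
  intro x y hxy
  have hx : 0 ≤ max x 0 := le_max_right x 0
  unfold hedgePotential
  gcongr

theorem le_sqrt_of_mul_hedgePotential_le {c ε x : ℝ} (hc : 0 < c) (hε : 0 < ε)
    (h : ε * hedgePotential c x ≤ exp 1) : x ≤ √(2 * c * (log (1 / ε) + 1)) := by
  have hexp : hedgePotential c x ≤ exp (log (1 / ε) + 1) := by
    rw [exp_add, exp_log (by positivity), one_div_mul_eq_div, le_div_iff₀ hε, mul_comm]
    exact h
  have hsq : max x 0 ^ 2 ≤ 2 * c * (log (1 / ε) + 1) := by
    rw [hedgePotential, exp_le_exp, div_le_iff₀ (by positivity)] at hexp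
    linarith
  calc x ≤ max x 0 := le_max_left x 0
    _ ≤ √(2 * c * (log (1 / ε) + 1)) := le_sqrt_of_sq_le hsq

theorem normalHedge_quantile_regret_le_of_potential_eq_general
    {N : ℕ} (R : Fin N → ℝ) (c : ℝ) (hc : 0 < c)
    (heq : (1 / N : ℝ) * ∑ i, Real.exp (max (R i) 0 ^ 2 / (2 * c)) = Real.exp 1)
    (ε : ℝ) (hε0 : 0 < ε) (i : Fin N)
    (hquant : ε * N ≤ ((Finset.univ.filter fun j => R i ≤ R j).card : ℝ)) :
    R i ≤ Real.sqrt (2 * c * (Real.log (1 / ε) + 1)) := by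
  have hN : (0 : ℝ) < N := mod_cast i.pos
  have htotal : ∑ j, hedgePotential c (R j) = N * exp 1 := by
    rw [← heq, ← mul_assoc, mul_one_div_cancel hN.ne', one_mul]
    rfl
  apply le_sqrt_of_mul_hedgePotential_le hc hε0
  refine le_of_mul_le_mul_left ?_ hN
  calc N * (ε * hedgePotential c (R i)) = ε * N * hedgePotential c (R i) := by ring
    _ ≤ #(univ.filter fun j => R i ≤ R j) * hedgePotential c (R i) :=
        mul_le_mul_of_nonneg_right hquant (hedgePotential_nonneg c (R i))
    _ ≤ ∑ j, hedgePotential c (R j) :=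
        card_filter_le_mul_le_sum univ (monotone_hedgePotential hc.le)
          (hedgePotential_nonneg c) R (R i)
    _ = N * exp 1 := htotal

/-- Second part of Lemma 1 (quantile version): if the average potential equals `e`
and at least `εN` of the regrets are at least `R i`, then
`R i ≤ √(2c(ln(1/ε) + 1))`. -/
theorem normalHedge_quantile_regret_le_of_potential_eq
    {N : ℕ} (hN : 0 < N) (R : Fin N → ℝ) (c : ℝ) (hc : 0 < c)
    (heq : (1 / N : ℝ) * ∑ i, Real.exp (max (R i) 0 ^ 2 / (2 * c)) = Real.exp 1)
    (ε : ℝ) (hε0 : 0 < ε) (hε1 : ε ≤ 1) (i : Fin N)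
    (hquant : ε * N ≤ ((Finset.univ.filter fun j => R i ≤ R j).card : ℝ)) :
    R i ≤ Real.sqrt (2 * c * (Real.log (1 / ε) + 1)) :=
  normalHedge_quantile_regret_le_of_potential_eq_general R c hc heq ε hε0 i hquant
end

section
/- Let ψ : ℝ → ℝ be a continuous, twice-differentiable, convex function such that for some a ∈ ℝ, ψ is non-decreasing on [a,∞) and ψ'(a) = 0. Define f : ℝ → ℝ by f(x) = ψ(x) for x ≥ a and f(x) = ψ(a) for x < a. Then f is differentiable, and for any x₀, x ∈ ℝ there exists ξ with min{x₀,x} ≤ ξ ≤ max{x₀,x} such that f'(x₀)(x − x₀) ≤ f(x) − f(x₀) ≤ f'(x₀)(x − x₀) + (ψ''(ξ)/2)(x − x₀)². (Lemma 7.) -/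
/-!
Write `f = ψ ∘ max (·, a)`. As `ψ` is convex and monotone on `[a, ∞)`, `f` is convex, and the
lower bound is its tangent-line inequality. As `ψ'(a) = 0`, `f' = ψ' ∘ max (·, a)`, and `a` is a
global minimum of `ψ` with `ψ' ≤ 0` to its left; with the tangent-line inequality for `ψ` this shows
that the gap `f x - f x₀ - f'(x₀)(x - x₀)` is at most the corresponding gap of `ψ`, which Taylor's
theorem with Lagrange remainder writes as `ψ''(ξ)(x - x₀)² / 2`.
-/

open Set

theorem ConvexOn.add_deriv_mul_sub_le {S : Set ℝ} {f : ℝ → ℝ} {x y : ℝ} (hfc : ConvexOn ℝ S f)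
    (hx : x ∈ S) (hy : y ∈ S) (hfx : DifferentiableAt ℝ f x) :
    f x + deriv f x * (y - x) ≤ f y := by
  rcases lt_trichotomy x y with hxy | rfl | hxy
  · have h := hfc.deriv_le_slope hx hy hxy hfx
    rw [slope_def_field, le_div_iff₀ (sub_pos.mpr hxy)] at h
    linarith
  · simp
  · have h := hfc.slope_le_deriv hy hx hxy hfx
    rw [slope_def_field, div_le_iff₀ (sub_pos.mpr hxy)] at h
    linarith

theorem taylor_mean_remainder_lagrange_one {g : ℝ → ℝ} (hg : Differentiable ℝ g)
    (hg' : Differentiable ℝ (deriv g)) (x₀ x : ℝ) :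
    ∃ ξ ∈ uIcc x₀ x, g x - g x₀ - deriv g x₀ * (x - x₀) = deriv (deriv g) ξ / 2 * (x - x₀) ^ 2 := by
  rcases eq_or_ne x₀ x with rfl | hne
  · exact ⟨x₀, left_mem_uIcc, by ring⟩
  set s := uIcc x₀ x
  have hs : UniqueDiffOn ℝ s := uniqueDiffOn_uIcc hne
  have hderiv₁ : EqOn (iteratedDerivWithin 1 g s) (deriv g) s := fun y hy => by
    rw [iteratedDerivWithin_one]; exact (hg y).derivWithin (hs y hy)
  have hC1 : ContDiffOn ℝ 1 g s :=
    (contDiff_one_iff_deriv.mpr ⟨hg, hg'.continuous⟩).contDiffOn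
  obtain ⟨ξ, hξ, heq⟩ := taylor_mean_remainder_lagrange (n := 1) hne hC1
    (hg'.differentiableOn.congr fun y hy => hderiv₁ (uIoo_subset_uIcc_self hy))
  have hξs : ξ ∈ s := uIoo_subset_uIcc_self hξ
  have hderiv₂ : iteratedDerivWithin 2 g s ξ = deriv (deriv g) ξ := by
    rw [iteratedDerivWithin_succ, derivWithin_congr hderiv₁ (hderiv₁ hξs)]
    exact (hg' ξ).derivWithin (hs ξ hξs)
  have htaylor : taylorWithinEval g 1 s x₀ x = g x₀ + deriv g x₀ * (x - x₀) := by
    simp only [taylorWithinEval_succ, taylor_within_zero_eval, CharP.cast_eq_zero, zero_add,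
      Nat.factorial_zero, Nat.cast_one, inv_one, pow_one, one_mul, hderiv₁ left_mem_uIcc,
      smul_eq_mul]
    ring
  refine ⟨ξ, hξs, ?_⟩
  rw [htaylor, hderiv₂] at heq
  norm_num [Nat.factorial] at heq
  linarith

section TruncateBelow

variable {ψ : ℝ → ℝ} {a : ℝ}

theorem ConvexOn.comp_max_const (hconv : ConvexOn ℝ (Ici a) ψ) (hmono : MonotoneOn ψ (Ici a)) :
    ConvexOn ℝ univ (fun x => ψ (max x a)) := by
  have himage : (fun x => max x a) '' univ = Ici a := by
    ext y
    simp only [image_univ, mem_range, mem_Ici]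
    exact ⟨fun ⟨x, hx⟩ => hx ▸ le_max_right x a, fun hy => ⟨y, max_eq_left hy⟩⟩
  have hmax : ConvexOn ℝ univ (fun x : ℝ => max x a) :=
    (convexOn_id convex_univ).sup (convexOn_const a convex_univ)
  exact (himage ▸ hconv).comp hmax (himage ▸ hmono)

theorem hasDerivAt_comp_max_const (hψ : Differentiable ℝ ψ) (ha : deriv ψ a = 0) (x : ℝ) :
    HasDerivAt (fun x => ψ (max x a)) (deriv ψ (max x a)) x := by
  rcases lt_trichotomy x a with hx | rfl | hx
  · rw [max_eq_right hx.le, ha]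
    refine (hasDerivAt_const x (ψ a)).congr_of_eventuallyEq ?_
    filter_upwards [Iio_mem_nhds hx] with y hy
    rw [max_eq_right (le_of_lt hy)]
  · rw [max_self, ← hasDerivWithinAt_univ, ← Iic_union_Ici]
    refine HasDerivWithinAt.union ?_ ?_
    · rw [ha]
      exact (hasDerivWithinAt_const x _ (ψ x)).congr (fun y hy => by rw [max_eq_right hy]) (by simp)
    · exact (hψ x).hasDerivAt.hasDerivWithinAt.congr (fun y hy => by rw [max_eq_left hy]) (by simp)
  · rw [max_eq_left hx.le]
    refine (hψ x).hasDerivAt.congr_of_eventuallyEq ?_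
    filter_upwards [Ioi_mem_nhds hx] with y hy
    rw [max_eq_left (le_of_lt hy)]

theorem sub_sub_deriv_mul_comp_max_const_le (hconv : ConvexOn ℝ univ ψ) (hψ : Differentiable ℝ ψ)
    (ha : deriv ψ a = 0) (x₀ x : ℝ) :
    ψ (max x a) - ψ (max x₀ a) - deriv ψ (max x₀ a) * (x - x₀) ≤
      ψ x - ψ x₀ - deriv ψ x₀ * (x - x₀) := by
  have htangent : ∀ s t, ψ s + deriv ψ s * (t - s) ≤ ψ t := fun s t =>
    hconv.add_deriv_mul_sub_le (mem_univ s) (mem_univ t) (hψ s)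
  rcases le_or_gt a x₀ with hx₀ | hx₀
  · rw [max_eq_left hx₀]
    have hmin : ψ a ≤ ψ x := by simpa [ha] using htangent a x
    have : ψ (max x a) ≤ ψ x := by
      rcases le_total a x with hx | hx
      · rw [max_eq_left hx]
      · rwa [max_eq_right hx]
    linarith
  · rw [max_eq_right hx₀.le, ha, zero_mul, sub_zero]
    have hderiv_nonpos : deriv ψ x₀ ≤ 0 :=
      ha ▸ hconv.monotoneOn_deriv (fun y _ => hψ y) (mem_univ x₀) (mem_univ a) hx₀.le
    rcases le_total a x with hx | hx
    · rw [max_eq_left hx]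
      nlinarith [htangent x₀ a]
    · rw [max_eq_right hx]
      linarith [htangent x₀ x]

end TruncateBelow

theorem truncated_convex_taylor_bounds_general
    (ψ : ℝ → ℝ) (a : ℝ)
    (hdiff : Differentiable ℝ ψ)
    (hdiff2 : Differentiable ℝ (deriv ψ))
    (hconv : ConvexOn ℝ Set.univ ψ)
    (hmono : MonotoneOn ψ (Set.Ici a))
    (hderiv_a : deriv ψ a = 0)
    (f : ℝ → ℝ) (hf : ∀ x, f x = if a ≤ x then ψ x else ψ a) :
    Differentiable ℝ f ∧
      ∀ x₀ x : ℝ, ∃ ξ : ℝ, min x₀ x ≤ ξ ∧ ξ ≤ max x₀ x ∧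
        deriv f x₀ * (x - x₀) ≤ f x - f x₀ ∧
        f x - f x₀ ≤ deriv f x₀ * (x - x₀) + deriv (deriv ψ) ξ / 2 * (x - x₀) ^ 2 := by
  obtain rfl : f = fun x => ψ (max x a) := funext fun x => by
    rw [hf]
    split_ifs with hx
    · rw [max_eq_left hx]
    · rw [max_eq_right (not_le.mp hx).le]
  have hderiv := hasDerivAt_comp_max_const hdiff hderiv_a
  have hfconv := (hconv.subset (subset_univ _) (convex_Ici a)).comp_max_const hmono
  refine ⟨fun x => (hderiv x).differentiableAt, fun x₀ x => ?_⟩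
  obtain ⟨ξ, hξ, htaylor⟩ := taylor_mean_remainder_lagrange_one hdiff hdiff2 x₀ x
  refine ⟨ξ, hξ.1, hξ.2, ?_, ?_⟩
  · linarith [hfconv.add_deriv_mul_sub_le (mem_univ x₀) (mem_univ x) (hderiv x₀).differentiableAt]
  · rw [(hderiv x₀).deriv]
    linarith [sub_sub_deriv_mul_comp_max_const_le hconv hdiff hderiv_a x₀ x]

/-- Lemma 7: if `ψ` is continuous, twice differentiable and convex, non-decreasing on
`[a, ∞)` with `ψ'(a) = 0`, and `f` agrees with `ψ` on `[a, ∞)` and equals `ψ(a)` below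
`a`, then `f` is differentiable and satisfies the stated first-order Taylor bounds. -/
theorem truncated_convex_taylor_bounds
    (ψ : ℝ → ℝ) (a : ℝ)
    (hcont : Continuous ψ)
    (hdiff : Differentiable ℝ ψ)
    (hdiff2 : Differentiable ℝ (deriv ψ))
    (hconv : ConvexOn ℝ Set.univ ψ)
    (hmono : MonotoneOn ψ (Set.Ici a))
    (hderiv_a : deriv ψ a = 0)
    (f : ℝ → ℝ) (hf : ∀ x, f x = if a ≤ x then ψ x else ψ a) :
    Differentiable ℝ f ∧
      ∀ x₀ x : ℝ, ∃ ξ : ℝ, min x₀ x ≤ ξ ∧ ξ ≤ max x₀ x ∧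
        deriv f x₀ * (x - x₀) ≤ f x - f x₀ ∧
        f x - f x₀ ≤ deriv f x₀ * (x - x₀) + deriv (deriv ψ) ξ / 2 * (x - x₀) ^ 2 :=
  truncated_convex_taylor_bounds_general ψ a hdiff hdiff2 hconv hmono hderiv_a f hf
end

section
/- Under the NormalHedge dynamics, the scale parameter is non-decreasing: for every round t ≥ 1, c_{t+1} ≥ c_t. (First part of Lemma 4.) -/
/-!
Write `Φ_c(R) = ∑ᵢ exp ([Rᵢ]₊² / 2c)`. The weights `w_{i,t}` are the partial derivatives of the
convex function `Φ_{c_t}` at `R_t`, and the instantaneous regrets `R_{t+1} - R_t` are orthogonal to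
them, so `Φ_{c_t}(R_{t+1}) ≥ Φ_{c_t}(R_t) = N e = Φ_{c_{t+1}}(R_{t+1})`. As the scale equation forces
some regret to be positive, `c ↦ Φ_c(R_{t+1})` is strictly decreasing, whence `c_t ≤ c_{t+1}`.
-/

open Real Finset Filter

/-- The NormalHedge dynamics with `N` actions.  Rounds are indexed by `t = 1, 2, …`;
`loss i t` is the loss of action `i` in round `t`, `p i t` its weight in round `t`,
`R i t` its cumulative regret after `t` rounds, and `c t` the scale parameter. -/
structure NormalHedge (N : ℕ) where
  hN : 2 ≤ N
  loss : Fin N → ℕ → ℝ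
  p : Fin N → ℕ → ℝ
  R : Fin N → ℕ → ℝ
  c : ℕ → ℝ
  loss_mem : ∀ i t, 1 ≤ t → loss i t ∈ Set.Icc (0 : ℝ) 1
  p_one : ∀ i, p i 1 = 1 / N
  R_zero : ∀ i, R i 0 = 0
  R_rec : ∀ i t, R i (t + 1) = R i t + ((∑ j, p j (t + 1) * loss j (t + 1)) - loss i (t + 1))
  c_pos : ∀ t, 1 ≤ t → 0 < c t
  c_eq : ∀ t, 1 ≤ t →
    (1 / N : ℝ) * ∑ i, Real.exp (max (R i t) 0 ^ 2 / (2 * c t)) = Real.exp 1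
  p_rec : ∀ i t, 1 ≤ t →
    p i (t + 1) = (max (R i t) 0 / c t) * Real.exp (max (R i t) 0 ^ 2 / (2 * c t)) /
      ∑ j, (max (R j t) 0 / c t) * Real.exp (max (R j t) 0 ^ 2 / (2 * c t))

lemma sum_mul_weighted_mean_sub_eq_zero {ι : Type*} [Fintype ι] {w : ι → ℝ} (hw : ∀ i, 0 ≤ w i)
    (ℓ : ι → ℝ) : ∑ i, w i * (∑ j, w j / (∑ k, w k) * ℓ j - ℓ i) = 0 := by
  by_cases hW : ∑ k, w k = 0
  · have hzero : ∀ i, w i = 0 := fun i =>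
      (Finset.sum_eq_zero_iff_of_nonneg fun i _ => hw i).1 hW i (Finset.mem_univ i)
    simp [hzero]
  · simp only [mul_sub, Finset.sum_sub_distrib, ← Finset.sum_mul, div_mul_eq_mul_div,
      ← Finset.sum_div, mul_div_cancel₀ _ hW, sub_self]

namespace NormalHedge

noncomputable def potential (c x : ℝ) : ℝ := exp (max x 0 ^ 2 / (2 * c))

noncomputable def weight (c x : ℝ) : ℝ := max x 0 / c * potential c x

lemma weight_nonneg {c : ℝ} (hc : 0 < c) (x : ℝ) : 0 ≤ weight c x := by
  unfold weight potential
  have : 0 ≤ max x 0 := le_max_right x 0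
  positivity

/-- `weight c` is the derivative of the convex function `potential c`: a tangent line inequality. -/
lemma potential_add_weight_mul_sub_le {c : ℝ} (hc : 0 < c) (x y : ℝ) :
    potential c x + weight c x * (y - x) ≤ potential c y := by
  set a := max x 0
  set b := max y 0
  have hax : a * x = a ^ 2 := by
    rcases le_total x 0 with h | h
    · simp [a, max_eq_right h]
    · simp [a, max_eq_left h, sq]
  have hay : a * y ≤ a * b := mul_le_mul_of_nonneg_left (le_max_left y 0) (le_max_right x 0)
  -- `a (y - x) ≤ a b - a² ≤ (b² - a²) / 2`
  have hlin : a * (y - x) / c ≤ (b ^ 2 - a ^ 2) / (2 * c) := by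
    rw [div_le_div_iff₀ hc (by positivity)]
    nlinarith [sq_nonneg (b - a)]
  calc potential c x + weight c x * (y - x)
      = potential c x * (1 + a * (y - x) / c) := by unfold weight; ring
    _ ≤ potential c x * exp ((b ^ 2 - a ^ 2) / (2 * c)) := by
        gcongr
        · exact (exp_pos _).le
        · linarith [add_one_le_exp ((b ^ 2 - a ^ 2) / (2 * c))]
    _ = potential c y := by rw [potential, potential, ← exp_add]; congr 1; ring

lemma potential_antitone_scale {c c' : ℝ} (hc' : 0 < c') (h : c' ≤ c) (x : ℝ) :
    potential c x ≤ potential c' x := by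
  unfold potential
  gcongr

lemma potential_strictAnti_scale {c c' : ℝ} (hc' : 0 < c') (h : c' < c) {x : ℝ} (hx : 0 < x) :
    potential c x < potential c' x := by
  unfold potential
  rw [max_eq_left hx.le]
  gcongr

variable {N : ℕ} (H : NormalHedge N)

lemma sum_potential_eq {t : ℕ} (ht : 1 ≤ t) :
    ∑ i, potential (H.c t) (H.R i t) = N * exp 1 := by
  have hN : (N : ℝ) ≠ 0 := by have := H.hN; positivity
  rw [← H.c_eq t ht]
  field_simp
  rfl

/-- Some regret is positive, since otherwise the potential would be `N ≠ N e`. -/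
lemma exists_regret_pos {t : ℕ} (ht : 1 ≤ t) : ∃ i, 0 < H.R i t := by
  by_contra! h
  have hN : (N : ℝ) ≠ 0 := by have := H.hN; positivity
  have hsum := H.sum_potential_eq ht
  simp only [potential, max_eq_right (h _), zero_pow two_ne_zero, zero_div, exp_zero,
    Finset.sum_const, Finset.card_univ, Fintype.card_fin, nsmul_eq_mul, mul_one] at hsum
  have he : exp 1 = 1 := mul_left_cancel₀ hN (hsum.symm.trans (mul_one _).symm)
  exact one_ne_zero ((exp_eq_one_iff 1).1 he)

lemma sum_potential_le_sum_potential_succ {t : ℕ} (ht : 1 ≤ t) :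
    ∑ i, potential (H.c t) (H.R i t) ≤ ∑ i, potential (H.c t) (H.R i (t + 1)) := by
  have hc := H.c_pos t ht
  have hweights : ∀ i, H.p i (t + 1) = weight (H.c t) (H.R i t) / ∑ j, weight (H.c t) (H.R j t) :=
    fun i => H.p_rec i t ht
  have hregret : ∀ i, H.R i (t + 1) - H.R i t
      = ∑ j, weight (H.c t) (H.R j t) / (∑ k, weight (H.c t) (H.R k t)) * H.loss j (t + 1)
        - H.loss i (t + 1) := fun i => by
    simp only [H.R_rec i t, ← hweights]; ring
  calc ∑ i, potential (H.c t) (H.R i t)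
      = ∑ i, (potential (H.c t) (H.R i t)
          + weight (H.c t) (H.R i t) * (H.R i (t + 1) - H.R i t)) := by
        simp only [Finset.sum_add_distrib, hregret,
          sum_mul_weighted_mean_sub_eq_zero fun _ => weight_nonneg hc _, add_zero]
    _ ≤ ∑ i, potential (H.c t) (H.R i (t + 1)) :=
        Finset.sum_le_sum fun i _ => potential_add_weight_mul_sub_le hc _ _

end NormalHedge

/-- First part of Lemma 4: under the NormalHedge dynamics, the scale parameter is
non-decreasing: for every round `t ≥ 1`, `c (t+1) ≥ c t`. -/
theorem normalHedge_scale_monotone {N : ℕ} (H : NormalHedge N)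
    (t : ℕ) (ht : 1 ≤ t) :
    H.c t ≤ H.c (t + 1) := by
  by_contra! hlt
  have hc' := H.c_pos (t + 1) (by omega)
  obtain ⟨i₀, hi₀⟩ := H.exists_regret_pos (t := t + 1) (by omega)
  have hstrict : ∑ i, NormalHedge.potential (H.c t) (H.R i (t + 1))
      < ∑ i, NormalHedge.potential (H.c (t + 1)) (H.R i (t + 1)) :=
    Finset.sum_lt_sum (fun i _ => NormalHedge.potential_antitone_scale hc' hlt.le _)
      ⟨i₀, Finset.mem_univ _, NormalHedge.potential_strictAnti_scale hc' hlt hi₀⟩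
  have hmono := H.sum_potential_le_sum_potential_succ ht
  rw [H.sum_potential_eq ht, ← H.sum_potential_eq (t := t + 1) (by omega)] at hmono
  exact hmono.not_gt hstrict
end

section
/- Upper bounds on perturbed potentials (Lemma 5 of the analysis): let N ≥ 2 be an integer and 0 < δ ≤ 1. Suppose R_1,…,R_N ∈ ℝ and c ≥ (16 ln N)/δ² + 1/δ satisfy (1/N) Σ_{i=1}^N exp(([R_i]_+)²/(2c)) = e, and suppose ρ_1,…,ρ_N ∈ ℝ satisfy |ρ_i| ≤ [R_i]_+ + 1 for each i. Then Σ_{i=1}^N exp(ρ_i²/(2c)) ≤ e^δ · N e, and Σ_{i=1}^N (ρ_i²/(2c))·exp(ρ_i²/(2c)) ≤ e^δ (δ + 1 + ln N) · N e. -/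
/-!
Write `x_i = ([R_i]_+)²/(2c)` and `y_i = ρ_i²/(2c)`. Since the `N` terms `exp x_i` sum to `Ne`,
each `x_i ≤ ln N + 1`, so `[R_i]_+ ≤ √(2c(ln N + 1))`, and the lower bound on `c` makes
`2[R_i]_+ + 1 ≤ 2cδ`. Hence `ρ_i² ≤ ([R_i]_+ + 1)² ≤ [R_i]_+² + 2cδ`, i.e. `y_i ≤ x_i + δ`, and
both bounds follow termwise, using `y_i ≤ δ + 1 + ln N` for the second one.
-/

open Real Finset

variable {ι : Type*}

theorem le_log_sum_exp [Fintype ι] (x : ι → ℝ) (i : ι) : x i ≤ log (∑ j, exp (x j)) :=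
  (le_log_iff_exp_le (sum_pos (fun j _ => exp_pos (x j)) ⟨i, mem_univ i⟩)).2 <|
    single_le_sum (fun j _ => (exp_pos (x j)).le) (mem_univ i)

theorem sum_exp_le_exp_mul_sum_exp {s : Finset ι} {x y : ι → ℝ} {δ : ℝ}
    (hyx : ∀ i ∈ s, y i ≤ x i + δ) :
    ∑ i ∈ s, exp (y i) ≤ exp δ * ∑ i ∈ s, exp (x i) := by
  rw [mul_sum]
  refine sum_le_sum fun i hi => ?_
  rw [← exp_add, add_comm δ]
  exact exp_le_exp.2 (hyx i hi)

theorem sum_mul_exp_le_exp_mul_sum_exp {s : Finset ι} {x y : ι → ℝ} {δ M : ℝ}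
    (hy : ∀ i ∈ s, 0 ≤ y i) (hyx : ∀ i ∈ s, y i ≤ x i + δ) (hx : ∀ i ∈ s, x i ≤ M) :
    ∑ i ∈ s, y i * exp (y i) ≤ exp δ * (δ + M) * ∑ i ∈ s, exp (x i) := by
  rw [mul_sum]
  refine sum_le_sum fun i hi => ?_
  have hy_le : y i ≤ δ + M := by linarith [hyx i hi, hx i hi]
  have hexp : exp (y i) ≤ exp δ * exp (x i) := by
    rw [← exp_add, add_comm δ]
    exact exp_le_exp.2 (hyx i hi)
  calc y i * exp (y i) ≤ (δ + M) * (exp δ * exp (x i)) :=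
        mul_le_mul hy_le hexp (exp_pos _).le ((hy i hi).trans hy_le)
    _ = exp δ * (δ + M) * exp (x i) := by ring

/-- The constant `1/7` is what the argument needs: `(2cδ - 1)² ≥ 64cL ≥ 8c(L + 1)` for `L ≥ 1/7`. -/
theorem two_mul_add_one_le_of_sq_div_le {a c δ L : ℝ} (ha : 0 ≤ a) (hδ : 0 < δ)
    (hL : 1 / 7 ≤ L) (hc : 16 * L / δ ^ 2 + 1 / δ ≤ c) (ha2 : a ^ 2 / (2 * c) ≤ L + 1) :
    2 * a + 1 ≤ 2 * c * δ := by
  have hcδ2 : 16 * L + δ ≤ c * δ ^ 2 := by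
    have := mul_le_mul_of_nonneg_right hc (sq_nonneg δ)
    rwa [add_mul, div_mul_cancel₀ _ (by positivity), one_div_mul_eq_div, pow_two,
      mul_div_cancel_right₀ _ hδ.ne', ← pow_two] at this
  have hc0 : 0 < c := by
    have : 0 < c * δ ^ 2 := by linarith
    exact pos_of_mul_pos_left this (sq_nonneg δ)
  have hcδ : 1 ≤ c * δ := by nlinarith
  rw [div_le_iff₀ (by positivity)] at ha2
  have hsq : (2 * a) ^ 2 ≤ (2 * c * δ - 1) ^ 2 := by nlinarith
  linarith [(sq_le_sq₀ (by positivity) (by linarith)).1 hsq]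

theorem sq_div_le_sq_div_add {ρ a c δ : ℝ} (hc : 0 < c) (hρ : |ρ| ≤ a + 1)
    (ha : 2 * a + 1 ≤ 2 * c * δ) : ρ ^ 2 / (2 * c) ≤ a ^ 2 / (2 * c) + δ := by
  have hρ2 : ρ ^ 2 ≤ (a + 1) ^ 2 := sq_le_sq' (abs_le.1 hρ).1 (abs_le.1 hρ).2
  rw [div_add' _ _ _ (by positivity), div_le_div_iff_of_pos_right (by positivity)]
  nlinarith

theorem normalHedge_perturbed_potential_upper_bounds_general
    {N : ℕ} (hN : 2 ≤ N) (δ : ℝ) (hδ0 : 0 < δ)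
    (R ρ : Fin N → ℝ) (c : ℝ)
    (hc : 16 * Real.log N / δ ^ 2 + 1 / δ ≤ c)
    (heq : (1 / N : ℝ) * ∑ i, Real.exp (max (R i) 0 ^ 2 / (2 * c)) = Real.exp 1)
    (hρ : ∀ i, |ρ i| ≤ max (R i) 0 + 1) :
    (∑ i, Real.exp (ρ i ^ 2 / (2 * c)) ≤ Real.exp δ * ((N : ℝ) * Real.exp 1)) ∧
    (∑ i, (ρ i ^ 2 / (2 * c)) * Real.exp (ρ i ^ 2 / (2 * c)) ≤
      Real.exp δ * (δ + 1 + Real.log N) * ((N : ℝ) * Real.exp 1)) := by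
  have hN0 : (0 : ℝ) < N := by positivity
  have hlogN : 1 / 7 ≤ log N := by
    have := log_le_log two_pos (by exact_mod_cast hN : (2 : ℝ) ≤ N)
    linarith [log_two_gt_d9]
  have hc0 : 0 < c := by
    have : 0 ≤ 16 * log N / δ ^ 2 := by positivity
    linarith [one_div_pos.2 hδ0]
  have hsum : ∑ i, exp (max (R i) 0 ^ 2 / (2 * c)) = N * exp 1 := by
    rw [← heq, ← mul_assoc, mul_one_div_cancel hN0.ne', one_mul]
  have hx : ∀ i ∈ univ, max (R i) 0 ^ 2 / (2 * c) ≤ 1 + log N := fun i _ => by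
    have := le_log_sum_exp (fun j => max (R j) 0 ^ 2 / (2 * c)) i
    rwa [hsum, log_mul hN0.ne' (exp_pos 1).ne', log_exp, add_comm] at this
  have hyx : ∀ i ∈ univ, ρ i ^ 2 / (2 * c) ≤ max (R i) 0 ^ 2 / (2 * c) + δ := fun i hi =>
    sq_div_le_sq_div_add hc0 (hρ i) <| two_mul_add_one_le_of_sq_div_le (le_max_right _ _) hδ0
      hlogN hc ((hx i hi).trans_eq (add_comm _ _))
  have hy : ∀ i ∈ univ, 0 ≤ ρ i ^ 2 / (2 * c) := fun i _ => by positivity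
  refine ⟨hsum ▸ sum_exp_le_exp_mul_sum_exp hyx, ?_⟩
  simpa only [hsum, ← add_assoc] using sum_mul_exp_le_exp_mul_sum_exp hy hyx hx

/-- Lemma 5 of the analysis (upper bounds on perturbed potentials): if the average
potential equals `e` at scale `c ≥ (16 ln N)/δ² + 1/δ` and `|ρ_i| ≤ [R_i]_+ + 1` for
each `i`, then `Σ exp(ρ_i²/(2c)) ≤ e^δ Ne` and
`Σ (ρ_i²/(2c)) exp(ρ_i²/(2c)) ≤ e^δ (δ + 1 + ln N) Ne`. -/
theorem normalHedge_perturbed_potential_upper_bounds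
    {N : ℕ} (hN : 2 ≤ N) (δ : ℝ) (hδ0 : 0 < δ) (hδ1 : δ ≤ 1)
    (R ρ : Fin N → ℝ) (c : ℝ)
    (hc : 16 * Real.log N / δ ^ 2 + 1 / δ ≤ c)
    (heq : (1 / N : ℝ) * ∑ i, Real.exp (max (R i) 0 ^ 2 / (2 * c)) = Real.exp 1)
    (hρ : ∀ i, |ρ i| ≤ max (R i) 0 + 1) :
    (∑ i, Real.exp (ρ i ^ 2 / (2 * c)) ≤ Real.exp δ * ((N : ℝ) * Real.exp 1)) ∧
    (∑ i, (ρ i ^ 2 / (2 * c)) * Real.exp (ρ i ^ 2 / (2 * c)) ≤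
      Real.exp δ * (δ + 1 + Real.log N) * ((N : ℝ) * Real.exp 1)) :=
  normalHedge_perturbed_potential_upper_bounds_general hN δ hδ0 R ρ c hc heq hρ
end
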